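/- Suppose β > 1 satisfies β^m = β^{m-1} + ⋯ + β + 1 for an odd integer m ≥ 3, and x^m − x^{m-1} − ⋯ − x − 1 is irreducible over ℚ. Then for every n ≥ 1, whenever ε, ε' ∈ {±1}^n satisfy Σ_{j=1}^n ε_j β^{−j} = Σ_{j=1}^n ε'_j β^{−j}, one has ε_1⋯ε_n = ε'_1⋯ε'_n. Consequently ‖ν_β^{(n)}‖ = 1 for all n. -/

import Mathlib

/-!
Write `ε_j = 1 - 2·[ε_j ≠ 1]`. If two sign vectors give the same point, then the sets `S`, `T` of
their minus signs satisfy `Σ_{j ∈ S} β^(-j-1) = Σ_{j ∈ T} β^(-j-1)`, so the integer polynomial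
`Σ_{j ∈ S} X^(n-1-j) - Σ_{j ∈ T} X^(n-1-j)` vanishes at `β`. It is therefore divisible by the
minimal polynomial `X^m - X^(m-1) - ⋯ - 1` in `ℚ[X]`, hence (this being monic) in `ℤ[X]`, and its
value `#S - #T` at `1` is a multiple of `1 - m`, which is even. So the two sign products agree.
Thus atoms of `ν_β^(n)` sitting at the same point carry the same sign, nothing cancels, and the
total variation is the total mass `2^n · 2^(-n) = 1`.
-/

open MeasureTheory

/-- The signed Bernoulli convolution ν_β^{(n)} = 2^{-n} Σ_{ε∈{±1}^n} ε₁⋯εₙ δ_{Σ εⱼ β^{-j}}. -/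
noncomputable def signedBernoulli (β : ℝ) (n : ℕ) : SignedMeasure ℝ :=
  (2 ^ n : ℝ)⁻¹ • ∑ ε : Fin n → Bool,
    (∏ j, (if ε j then (1 : ℝ) else -1)) •
      (Measure.dirac (∑ j : Fin n, (if ε j then (1 : ℝ) else -1) *
        β ^ (-((j : ℕ) : ℤ) - 1))).toSignedMeasure

/-- Total variation norm of ν_β^{(n)}. -/
noncomputable def signedBernoulliTV (β : ℝ) (n : ℕ) : ℝ :=
  ((signedBernoulli β n).totalVariation Set.univ).toReal

open Polynomial Finset

theorem Polynomial.Monic.dvd_of_aeval_eq_zero_of_irreducible_map {K : Type*} [Field K]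
    [CharZero K] {p q : ℤ[X]} (hp : p.Monic) (hirr : Irreducible (p.map (algebraMap ℤ ℚ)))
    {x : K} (hpx : aeval x p = 0) (hqx : aeval x q = 0) : p ∣ q := by
  have hmin : p.map (algebraMap ℤ ℚ) = minpoly ℚ x :=
    minpoly.eq_of_irreducible_of_monic hirr (by rwa [aeval_map_algebraMap]) (hp.map _)
  rw [← map_dvd_map _ (algebraMap ℤ ℚ).injective_int hp, hmin]
  exact minpoly.dvd ℚ x (by rwa [aeval_map_algebraMap])

theorem monic_X_pow_sub_sum_range (R : Type*) [CommRing R] [Nontrivial R] (m : ℕ) :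
    (X ^ m - ∑ j ∈ range m, X ^ j : R[X]).Monic := by
  refine monic_X_pow_sub ((degree_sum_le _ _).trans_lt
    ((Finset.sup_lt_iff (by exact WithBot.bot_lt_coe m)).2 fun j hj => ?_))
  rw [degree_X_pow]
  exact_mod_cast mem_range.1 hj

theorem even_eval_one_of_aeval_eq_zero {K : Type*} [Field K] [CharZero K] {m : ℕ}
    (hm : Odd m) {x : K} (hx : x ^ m = ∑ j ∈ range m, x ^ j)
    (hirr : Irreducible (X ^ m - ∑ j ∈ range m, X ^ j : ℚ[X])) {q : ℤ[X]}
    (hq : aeval x q = 0) : Even (q.eval 1) := by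
  set p : ℤ[X] := X ^ m - ∑ j ∈ range m, X ^ j
  have hdvd : p ∣ q := (monic_X_pow_sub_sum_range ℤ m).dvd_of_aeval_eq_zero_of_irreducible_map
    (by simpa [p, Polynomial.map_sum] using hirr) (by simp [hx]) hq
  have hp1 : Even (p.eval 1) := by
    obtain ⟨k, rfl⟩ := hm
    exact ⟨-k, by simp [p]; ring⟩
  exact even_iff_two_dvd.2 ((even_iff_two_dvd.1 hp1).trans (eval_dvd hdvd))

theorem even_card_iff_of_sum_zpow_eq {K : Type*} [Field K] [CharZero K] {m : ℕ}
    (hm : Odd m) {x : K} (hx0 : x ≠ 0) (hx : x ^ m = ∑ j ∈ range m, x ^ j)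
    (hirr : Irreducible (X ^ m - ∑ j ∈ range m, X ^ j : ℚ[X])) {n : ℕ} {S T : Finset (Fin n)}
    (h : ∑ j ∈ S, x ^ (-(j : ℤ) - 1) = ∑ j ∈ T, x ^ (-(j : ℤ) - 1)) :
    Even #S ↔ Even #T := by
  set q : ℤ[X] := ∑ j ∈ S, X ^ (n - 1 - j : ℕ) - ∑ j ∈ T, X ^ (n - 1 - j : ℕ)
  have hshift : ∀ j : Fin n, x ^ (n - 1 - j : ℕ) = x ^ (n : ℤ) * x ^ (-(j : ℤ) - 1) := by
    intro j
    rw [← zpow_natCast, ← zpow_add₀ hx0]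
    congr 1
    omega
  have hq : aeval x q = 0 := by
    simp only [q, map_sub, map_sum, map_pow, aeval_X, hshift, ← mul_sum, h, sub_self]
  have hq1 : q.eval 1 = #S - #T := by simp [q, eval_finsetSum]
  have := even_eval_one_of_aeval_eq_zero hm hx hirr hq
  rw [hq1, Int.even_sub] at this
  exact_mod_cast this

section Signs

variable {ι R : Type*} [Fintype ι] [CommRing R] [DecidableEq R] {ε : ι → R}

theorem Finset.prod_eq_neg_one_pow_card_ne_one
    (hε : ∀ j, ε j = 1 ∨ ε j = -1) : ∏ j, ε j = (-1) ^ #{j | ε j ≠ 1} := by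
  rw [← prod_const, prod_filter]
  refine prod_congr rfl fun j _ => ?_
  rcases hε j with h | h <;> simp [h]

theorem Finset.sum_mul_eq_sum_sub_two_mul_sum_ne_one
    (hε : ∀ j, ε j = 1 ∨ ε j = -1) (w : ι → R) :
    ∑ j, ε j * w j = ∑ j, w j - 2 * ∑ j with ε j ≠ 1, w j := by
  rw [sum_filter, mul_sum, ← sum_sub_distrib]
  refine sum_congr rfl fun j _ => ?_
  by_cases h1 : ε j = 1
  · simp [h1]
  · rw [if_pos h1, (hε j).resolve_left h1]
    ring

end Signs

theorem prod_eq_prod_of_sum_zpow_eq {K : Type*} [Field K] [CharZero K] {m : ℕ}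
    (hm : Odd m) {x : K} (hx0 : x ≠ 0) (hx : x ^ m = ∑ j ∈ range m, x ^ j)
    (hirr : Irreducible (X ^ m - ∑ j ∈ range m, X ^ j : ℚ[X])) {n : ℕ} {ε ε' : Fin n → K}
    (hε : ∀ j, ε j = 1 ∨ ε j = -1) (hε' : ∀ j, ε' j = 1 ∨ ε' j = -1)
    (h : ∑ j, ε j * x ^ (-(j : ℤ) - 1) = ∑ j, ε' j * x ^ (-(j : ℤ) - 1)) :
    ∏ j, ε j = ∏ j, ε' j := by
  classical
  rw [prod_eq_neg_one_pow_card_ne_one hε, prod_eq_neg_one_pow_card_ne_one hε']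
  refine neg_one_pow_congr (even_card_iff_of_sum_zpow_eq hm hx0 hx hirr ?_)
  rw [sum_mul_eq_sum_sub_two_mul_sum_ne_one hε, sum_mul_eq_sum_sub_two_mul_sum_ne_one hε'] at h
  linear_combination (-1 / 2 : K) * h

section Atomic

variable {α ι : Type*} [MeasurableSpace α]

theorem MeasureTheory.SignedMeasure.totalVariation_toSignedMeasure_sub {μ ν : Measure α}
    [IsFiniteMeasure μ] [IsFiniteMeasure ν] (h : μ ⟂ₘ ν) :
    (μ.toSignedMeasure - ν.toSignedMeasure).totalVariation = μ + ν := by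
  have hj : (μ.toSignedMeasure - ν.toSignedMeasure).toJordanDecomposition = ⟨μ, ν, h⟩ :=
    toJordanDecomposition_eq rfl
  rw [totalVariation, hj]

theorem sum_smul_toSignedMeasure_dirac_eq_sub (s : Finset ι) (c : ι → ℝ) (x : ι → α) :
    ∑ i ∈ s, c i • (Measure.dirac (x i)).toSignedMeasure =
      (∑ i ∈ s, (c i).toNNReal • Measure.dirac (x i)).toSignedMeasure -
        (∑ i ∈ s, (-c i).toNNReal • Measure.dirac (x i)).toSignedMeasure := by
  ext A hA
  simp only [sub_apply, _root_.sum_apply, smul_apply, Measure.toSignedMeasure_apply_measurable hA,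
    measureReal_def, smul_eq_mul, Measure.finsetSum_apply, Measure.smul_apply,
    Measure.nnreal_smul_coe_apply]
  rw [ENNReal.toReal_sum (fun i _ => by finiteness), ENNReal.toReal_sum (fun i _ => by finiteness),
    ← sum_sub_distrib]
  refine sum_congr rfl fun i _ => ?_
  rw [ENNReal.toReal_mul, ENNReal.toReal_mul, ENNReal.coe_toReal, ENNReal.coe_toReal,
    Real.coe_toNNReal', Real.coe_toNNReal', ← sub_mul, max_zero_sub_max_neg_zero_eq_self]

theorem mutuallySingular_sum_dirac [MeasurableSingletonClass α] (s : Finset ι) (c : ι → ℝ)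
    (x : ι → α) (h : ∀ i ∈ s, ∀ j ∈ s, x i = x j → 0 ≤ c i * c j) :
    (∑ i ∈ s, (c i).toNNReal • Measure.dirac (x i)) ⟂ₘ
      ∑ i ∈ s, (-c i).toNNReal • Measure.dirac (x i) := by
  classical
  set S : Set α := ↑({i ∈ s | c i < 0}.image x)
  refine ⟨S, (Finset.finite_toSet _).measurableSet, ?_, ?_⟩
  · simp only [Measure.finsetSum_apply, Measure.smul_apply]
    refine sum_eq_zero fun i hi => ?_
    rcases le_or_gt (c i) 0 with hc | hc
    · simp [Real.toNNReal_of_nonpos hc]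
    · have : x i ∉ S := by
        simp only [S, coe_image, Set.mem_image, mem_coe, mem_filter]
        rintro ⟨j, ⟨hj, hcj⟩, hxj⟩
        nlinarith [h i hi j hj hxj.symm]
      simp [this]
  · simp only [Measure.finsetSum_apply, Measure.smul_apply]
    refine sum_eq_zero fun i hi => ?_
    rcases le_or_gt 0 (c i) with hc | hc
    · simp [Real.toNNReal_of_nonpos (neg_nonpos.2 hc)]
    · have : x i ∈ S := by
        simp only [S, coe_image]
        exact Set.mem_image_of_mem x (by simpa using ⟨hi, hc⟩)
      simp [this]

theorem totalVariation_sum_smul_dirac [MeasurableSingletonClass α] (s : Finset ι) (c : ι → ℝ)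
    (x : ι → α) (h : ∀ i ∈ s, ∀ j ∈ s, x i = x j → 0 ≤ c i * c j) :
    (∑ i ∈ s, c i • (Measure.dirac (x i)).toSignedMeasure).totalVariation =
      ∑ i ∈ s, ‖c i‖₊ • Measure.dirac (x i) := by
  rw [sum_smul_toSignedMeasure_dirac_eq_sub, SignedMeasure.totalVariation_toSignedMeasure_sub
    (mutuallySingular_sum_dirac s c x h), ← sum_add_distrib]
  refine sum_congr rfl fun i _ => ?_
  rw [← add_smul]
  congr 1
  ext
  simp [max_zero_add_max_neg_zero_eq_abs_self]

end Atomic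

theorem signedBernoulliTV_eq_one {β : ℝ} {n : ℕ}
    (h : ∀ ε ε' : Fin n → ℝ, (∀ j, ε j = 1 ∨ ε j = -1) → (∀ j, ε' j = 1 ∨ ε' j = -1) →
      ∑ j, ε j * β ^ (-(j : ℤ) - 1) = ∑ j, ε' j * β ^ (-(j : ℤ) - 1) → ∏ j, ε j = ∏ j, ε' j) :
    signedBernoulliTV β n = 1 := by
  set sgn : (Fin n → Bool) → Fin n → ℝ := fun ε j => if ε j then 1 else -1
  have hsgn : ∀ ε j, sgn ε j = 1 ∨ sgn ε j = -1 := fun ε j => by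
    by_cases hj : ε j <;> simp [sgn, hj]
  rw [signedBernoulliTV, signedBernoulli, smul_sum]
  simp_rw [smul_smul]
  rw [totalVariation_sum_smul_dirac]
  · simp [Measure.finsetSum_apply, apply_ite]
  · intro ε _ ε' _ hx
    rw [h _ _ (hsgn ε) (hsgn ε') hx]
    exact mul_self_nonneg _

theorem stmt_15_general (m : ℕ) (hmo : Odd m) (β : ℝ) (hβ1 : 1 < β)
    (hβ : β ^ m = ∑ j ∈ Finset.range m, β ^ j)
    (hirr : Irreducible ((Polynomial.X ^ m - ∑ j ∈ Finset.range m, Polynomial.X ^ j :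
      Polynomial ℚ))) :
    (∀ n : ℕ, 1 ≤ n → ∀ ε ε' : Fin n → ℝ,
      (∀ j, ε j = 1 ∨ ε j = -1) → (∀ j, ε' j = 1 ∨ ε' j = -1) →
      (∑ j, ε j * β ^ (-((j : ℕ) : ℤ) - 1)) = ∑ j, ε' j * β ^ (-((j : ℕ) : ℤ) - 1) →
      ∏ j, ε j = ∏ j, ε' j) ∧
    (∀ n : ℕ, 1 ≤ n → signedBernoulliTV β n = 1) := by
  have hβ0 : β ≠ 0 := (zero_lt_one.trans hβ1).ne'
  exact ⟨fun _ _ _ _ => prod_eq_prod_of_sum_zpow_eq hmo hβ0 hβ hirr,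
    fun _ _ => signedBernoulliTV_eq_one fun _ _ => prod_eq_prod_of_sum_zpow_eq hmo hβ0 hβ hirr⟩

theorem stmt_15 (m : ℕ) (hm : 3 ≤ m) (hmo : Odd m) (β : ℝ) (hβ1 : 1 < β)
    (hβ : β ^ m = ∑ j ∈ Finset.range m, β ^ j)
    (hirr : Irreducible ((Polynomial.X ^ m - ∑ j ∈ Finset.range m, Polynomial.X ^ j :
      Polynomial ℚ))) :
    (∀ n : ℕ, 1 ≤ n → ∀ ε ε' : Fin n → ℝ,
      (∀ j, ε j = 1 ∨ ε j = -1) → (∀ j, ε' j = 1 ∨ ε' j = -1) →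
      (∑ j, ε j * β ^ (-((j : ℕ) : ℤ) - 1)) = ∑ j, ε' j * β ^ (-((j : ℕ) : ℤ) - 1) →
      ∏ j, ε j = ∏ j, ε' j) ∧
    (∀ n : ℕ, 1 ≤ n → signedBernoulliTV β n = 1) :=
  stmt_15_general m hmo β hβ1 hβ hirr
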